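/- Let G be a finite group of parabolic characteristic p, T a subgroup of order p generated by a non-p-central element, C = C_G(T), and O_C = O_p(C). Then O_C contains a p-central element of G if and only if C has characteristic p. -/

import Mathlib

/-- The largest normal `p`-subgroup `O_p(G)`: the join of all normal `p`-subgroups. -/
def pCore (p : ℕ) (G : Type*) [Group G] : Subgroup G :=
  ⨆ (N : Subgroup G) (_ : N.Normal) (_ : IsPGroup p N), N

/-- A group `G` has characteristic `p` if `C_G(O_p(G)) ≤ O_p(G)`. -/
def HasCharP (p : ℕ) (G : Type*) [Group G] : Prop :=
  Subgroup.centralizer (pCore p G : Set G) ≤ pCore p G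

/-- An element is `p`-central if it has order `p` and lies in the center of some
Sylow `p`-subgroup of `G`. -/
def IsPCentral (p : ℕ) {G : Type*} [Group G] (x : G) : Prop :=
  orderOf x = p ∧ ∃ S : Sylow p G,
    x ∈ (S : Subgroup G) ⊓ Subgroup.centralizer ((S : Subgroup G) : Set G)

/-- A `p`-subgroup `P` is `p`-centric if `Z(P) = P ⊓ C_G(P)` is a Sylow `p`-subgroup of
`C_G(P)`, expressed via maximality among `p`-subgroups of `C_G(P)`. -/
def IsPCentric (p : ℕ) {G : Type*} [Group G] (P : Subgroup G) : Prop :=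
  ∀ Q : Subgroup G, Q ≤ Subgroup.centralizer (P : Set G) → IsPGroup p Q →
    P ⊓ Subgroup.centralizer (P : Set G) ≤ Q →
    Q = P ⊓ Subgroup.centralizer (P : Set G)

/-- The step `P ↦ O_p(N_G(P))`, viewed as a subgroup of `G`. -/
def pRadicalStep (p : ℕ) {G : Type*} [Group G] (P : Subgroup G) : Subgroup G :=
  (pCore p ↥(Subgroup.normalizer (P : Set G))).map (Subgroup.normalizer (P : Set G)).subtype

/-- The chain `P₀ = Q`, `P_{i+1} = O_p(N_G(P_i))`. -/
def radChain (p : ℕ) {G : Type*} [Group G] (Q : Subgroup G) : ℕ → Subgroup G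
  | 0 => Q
  | n + 1 => pRadicalStep p (radChain p Q n)

/-- `G` has local characteristic `p`: every `p`-local subgroup has characteristic `p`. -/
def LocalCharP (p : ℕ) (G : Type*) [Group G] : Prop :=
  ∀ P : Subgroup G, P ≠ ⊥ → IsPGroup p P → HasCharP p ↥(Subgroup.normalizer (P : Set G))

/-- `G` has parabolic characteristic `p`: every `p`-local subgroup containing a Sylow
`p`-subgroup of `G` has characteristic `p`. -/
def ParabolicCharP (p : ℕ) (G : Type*) [Group G] : Prop :=
  ∀ P : Subgroup G, P ≠ ⊥ → IsPGroup p P →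
    (∃ S : Sylow p G, (S : Subgroup G) ≤ Subgroup.normalizer (P : Set G)) → HasCharP p ↥(Subgroup.normalizer (P : Set G))

/-!
If `C = C_G(T)` has characteristic `p`, choose a Sylow subgroup `S ⊇ T · O_p(C)` and an element
`z` of order `p` in `Z(S)`: it centralizes `T` and `O_p(C)`, hence lies in `O_p(C)`.

Conversely let `x ∈ Q = O_p(C)` be `p`-central. Then `N = N_G(⟨x⟩)` contains a Sylow subgroup,
so has characteristic `p`; put `E = O_p(N)` and `W = C_G(Q) ≤ C`. It suffices that `W` is a
`p`-group, for then `W ≤ Q`. Let `y ∈ W` have order prime to `p`. The part of `E` normalized by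
`W` lies in `O_p(W) ≤ Q`, so `y` centralizes `[C_E(T), y]` and, by coprimality, `C_E(T)`.
Thompson's `A × B` lemma (with `A = ⟨y⟩`, `B = T`) gives `[E, y] = 1`, so `y ∈ E` is a
`p`-element, i.e. `y = 1`.
-/

section

variable {G : Type*} [Group G] {p : ℕ}

theorem Subgroup.Normal.le_pCore {N : Subgroup G} (hN : N.Normal) (hNp : IsPGroup p N) :
    N ≤ pCore p G :=
  le_iSup_of_le N (le_iSup_of_le hN (le_iSup_of_le hNp le_rfl))

theorem pCore_normal_and_isPGroup [Finite G] : (pCore p G).Normal ∧ IsPGroup p (pCore p G) := by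
  have hS : SupClosed {N : Subgroup G | N.Normal ∧ IsPGroup p N} :=
    fun N₁ ⟨_, hp₁⟩ N₂ ⟨_, hp₂⟩ =>
      ⟨Subgroup.sup_normal N₁ N₂, hp₁.to_sup_of_normal_right hp₂⟩
  have hpCore : pCore p G = ⨆ N ∈ {N : Subgroup G | N.Normal ∧ IsPGroup p N}, N := by
    simp only [pCore, Set.mem_ofPred_eq, iSup_and]
  rw [hpCore]
  exact hS.biSup_mem (Set.toFinite _) ⟨Subgroup.normal_bot, IsPGroup.of_bot⟩ fun _ h => h

instance pCore_normal [Finite G] : (pCore p G).Normal := pCore_normal_and_isPGroup.1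

theorem pCore_isPGroup [Finite G] : IsPGroup p (pCore p G) := pCore_normal_and_isPGroup.2

/-- `O_p(K)`, as a subgroup of the ambient group. -/
def Subgroup.pCore (p : ℕ) (K : Subgroup G) : Subgroup G := (_root_.pCore p K).map K.subtype

end

open Subgroup hiding pCore
open scoped commutatorElement Pointwise

section

variable {G : Type*} [Group G] {p : ℕ}

theorem commute_of_commute_commutatorElement {y g : G} {m n : ℕ} (hmn : m.Coprime n)
    (hy : y ^ n = 1) (hc : Commute y ⁅y, g⁆) (hcm : ⁅y, g⁆ ^ m = 1) : Commute y g := by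
  have hconj : ∀ k : ℕ, y ^ k * g * (y ^ k)⁻¹ = ⁅y, g⁆ ^ k * g := by
    intro k
    induction k with
    | zero => simp
    | succ k ih =>
      calc y ^ (k + 1) * g * (y ^ (k + 1))⁻¹
          = y * (y ^ k * g * (y ^ k)⁻¹) * y⁻¹ := by group
        _ = ⁅y, g⁆ ^ k * (y * g * y⁻¹ * g⁻¹) * g := by
          rw [ih, ← mul_assoc, (hc.pow_right k).eq]; group
        _ = ⁅y, g⁆ ^ (k + 1) * g := by rw [← commutatorElement_def, pow_succ]
  have hcn : ⁅y, g⁆ ^ n = 1 := by simpa [hy] using (hconj n).symm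
  have hc1 := pow_gcd_eq_one.mpr ⟨hcm, hcn⟩
  rw [hmn.gcd_eq_one, pow_one] at hc1
  exact commutatorElement_eq_one_iff_commute.mp hc1

theorem le_centralizer_of_commutator_le_centralizer {P A : Subgroup G}
    (hP : IsPGroup p P) (hA : (Nat.card A).Coprime p) (hAP : A ≤ normalizer P)
    (h : ⁅P, A⁆ ≤ centralizer A) : P ≤ centralizer A := by
  intro g hg
  refine mem_centralizer_iff.mpr fun a ha => ?_
  have hcomm : ⁅a, g⁆ ∈ ⁅A, P⁆ := commutator_mem_commutator ha hg
  have hcP : ⁅a, g⁆ ∈ P := le_normalizer_iff_commutator_le_right.mp hAP hcomm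
  have hca : Commute a ⁅a, g⁆ :=
    mem_centralizer_iff.mp (h (commutator_comm P A ▸ hcomm)) a ha
  obtain ⟨k, hk⟩ := hP ⟨_, hcP⟩
  have haA : a ^ Nat.card A = 1 := congrArg Subtype.val (pow_card_eq_one' (x := (⟨a, ha⟩ : A)))
  exact (commute_of_commute_commutatorElement (hA.symm.pow_left k) haA hca
    (by simpa using congrArg Subtype.val hk)).eq

theorem normalizer_le_normalizer_centralizer (H : Subgroup G) :
    normalizer H ≤ normalizer (centralizer (H : Set G) : Set G) := by
  refine le_normalizer_iff.mpr fun g hg z hz => mem_centralizer_iff.mpr fun h hh => ?_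
  have hconj : g⁻¹ * h * g ∈ H := by simpa using (mem_normalizer_iff.mp (inv_mem hg) h).mp hh
  have hcomm := mem_centralizer_iff.mp hz _ hconj
  calc h * (g * z * g⁻¹) = g * ((g⁻¹ * h * g) * z) * g⁻¹ := by group
    _ = g * (z * (g⁻¹ * h * g)) * g⁻¹ := by rw [hcomm]
    _ = g * z * g⁻¹ * h := by group

theorem lt_inf_normalizer_of_isNilpotent {K X : Subgroup G} [Group.IsNilpotent X]
    (hKX : K < X) : K < X ⊓ normalizer K := by
  have hlt : K.subgroupOf X < ⊤ :=
    lt_top_iff_ne_top.mpr fun h => hKX.not_ge (subgroupOf_eq_top.mp h)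
  have := map_subtype_lt_map_subtype.mpr (Group.normalizerCondition_of_isNilpotent _ hlt)
  rwa [← subgroupOf_normalizer_eq hKX.le, subgroupOf_map_subtype, subgroupOf_map_subtype,
    inf_of_le_left hKX.le, inf_comm] at this

section RelativePCore

variable (K : Subgroup G)

theorem Subgroup.pCore_le : K.pCore p ≤ K := map_subtype_le _

theorem Subgroup.isPGroup_pCore [Finite G] : IsPGroup p (K.pCore p) := pCore_isPGroup.map _

theorem Subgroup.le_pCore {X : Subgroup G} (hXK : X ≤ K) (hX : IsPGroup p X)
    (hKX : K ≤ normalizer X) : X ≤ K.pCore p := by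
  have : (X.subgroupOf K).Normal := (normal_subgroupOf_iff_le_normalizer hXK).mpr hKX
  have := map_mono (f := K.subtype) (this.le_pCore (hX.comap_subtype (K := K)))
  rwa [subgroupOf_map_subtype, inf_of_le_left hXK] at this

theorem Subgroup.le_normalizer_pCore [Finite G] : K ≤ normalizer (K.pCore p) := by
  have := le_normalizer_map (H := _root_.pCore p K) K.subtype
  rwa [normalizer_eq_top, ← MonoidHom.range_eq_map, range_subtype] at this

theorem Subgroup.normalizer_le_normalizer_pCore [Finite G] :
    normalizer K ≤ normalizer (K.pCore p : Set G) := by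
  refine le_normalizer_iff.mpr fun g hg u hu => ?_
  set X := (K.pCore p).map (MulAut.conj g).toMonoidHom
  suffices X ≤ K.pCore p from this ⟨u, hu, rfl⟩
  refine K.le_pCore ?_ (K.isPGroup_pCore.map _) (le_normalizer_iff.mpr fun k hk x hx => ?_)
  · rintro _ ⟨v, hv, rfl⟩
    exact (mem_normalizer_iff.mp hg v).mp (K.pCore_le hv)
  · obtain ⟨v, hv, rfl⟩ := hx
    have hk' : g⁻¹ * k * g ∈ K := by simpa using (mem_normalizer_iff.mp (inv_mem hg) k).mp hk
    refine ⟨_, (mem_normalizer_iff.mp (K.le_normalizer_pCore hk') v).mp hv, ?_⟩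
    simp only [MulEquiv.coe_toMonoidHom, MulAut.conj_apply]
    group

theorem hasCharP_iff_inf_centralizer_le :
    HasCharP p K ↔ K ⊓ centralizer (K.pCore p) ≤ K.pCore p := by
  refine ⟨fun h g ⟨hgK, hgC⟩ => ?_, fun h g hg => ?_⟩
  · refine ⟨⟨g, hgK⟩, h (mem_centralizer_iff.mpr fun u hu => Subtype.ext ?_), rfl⟩
    exact mem_centralizer_iff.mp hgC u ⟨u, hu, rfl⟩
  · refine (mem_map_iff_mem K.subtype_injective).mp (h ⟨g.2, mem_centralizer_iff.mpr ?_⟩)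
    rintro _ ⟨u, hu, rfl⟩
    exact congrArg Subtype.val (mem_centralizer_iff.mp hg u hu)

end RelativePCore

/-- Thompson's `A × B` lemma. -/
theorem le_centralizer_of_inf_centralizer_le [Finite G] [Fact p.Prime] {A B : Subgroup G}
    (hB : IsPGroup p B) (hA : (Nat.card A).Coprime p) (hAB : A ≤ centralizer B)
    (P : Subgroup G) (hP : IsPGroup p P) (hAP : A ≤ normalizer P) (hBP : B ≤ normalizer P)
    (hPB : P ⊓ centralizer B ≤ centralizer A) : P ≤ centralizer A := by
  induction P using WellFoundedLT.induction with
  | _ P ih =>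
  have hBA : B ≤ centralizer A := le_centralizer_iff.mp hAB
  set D := P ⊓ centralizer A
  set K := D ⊔ B
  have hKA : K ≤ centralizer A := sup_le inf_le_right hBA
  by_cases hPK : P ≤ K
  · exact hPK.trans hKA
  have hKX : K < P ⊔ B :=
    lt_of_le_of_ne (sup_le_sup_right inf_le_left B) fun h => hPK (h ▸ le_sup_left)
  have : Group.IsNilpotent (P ⊔ B :) := (hP.to_sup_of_normal_left' hB hBP).isNilpotent
  obtain ⟨g, hgXN, hgK⟩ := SetLike.exists_of_lt (lt_inf_normalizer_of_isNilpotent hKX)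
  obtain ⟨hgX, hgN⟩ := mem_inf.mp hgXN
  have hgPB : g ∈ (P : Set G) * (B : Set G) := by
    rwa [← coe_mul_of_right_le_normalizer_left P B hBP]
  obtain ⟨h, hh, b, hb, rfl⟩ := hgPB
  have hbK : b ∈ K := le_sup_right (a := D) hb
  have hhN : h ∈ normalizer K := by simpa using mul_mem hgN (inv_mem (le_normalizer hbK))
  have hhK : h ∉ K := fun hhK => hgK (mul_mem hhK hbK)
  have normalizes (L : Subgroup G) (hLP : L ≤ normalizer P)
      (hLA : L ≤ normalizer (centralizer (A : Set G) : Set G)) (hLB : L ≤ normalizer B) :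
      L ≤ normalizer (P ⊓ normalizer K :) := by
    have hLD : L ≤ normalizer D := (le_inf hLP hLA).trans inf_normalizer_le_normalizer_inf
    have hLK : L ≤ normalizer K :=
      (le_inf hLD hLB).trans (normalizer_inf_normalizer_le_normalizer_sup D B)
    exact (le_inf hLP (hLK.trans le_normalizer)).trans inf_normalizer_le_normalizer_inf
  rcases (inf_le_left : P ⊓ normalizer K ≤ P).lt_or_eq with hMP | hMP
  · have hMA := ih _ hMP (hP.to_le inf_le_left)
      (normalizes A hAP (le_normalizer.trans (normalizer_le_normalizer_centralizer A))
        (hAB.trans (centralizer_le_normalizer _)))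
      (normalizes B hBP (hBA.trans le_normalizer) le_normalizer)
      ((inf_le_inf_right _ inf_le_left).trans hPB)
    exact absurd (le_sup_left (a := D) ⟨hh, hMA ⟨hh, hhN⟩⟩) hhK
  · -- `[B, P] ≤ K ≤ C(A)`, so the three subgroups lemma gives `[P, A] ≤ C_P(B) ≤ C(A)`
    have hPN : P ≤ normalizer K := hMP ▸ inf_le_right
    have hBPA : ⁅B, P⁆ ≤ centralizer A :=
      ((commutator_mono le_sup_right le_rfl).trans
        (le_normalizer_iff_commutator_le_left.mp hPN)).trans hKA
    have h3 : ⁅⁅P, A⁆, B⁆ = ⊥ := commutator_commutator_eq_bot_of_rotate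
      (by rw [commutator_eq_bot_iff_le_centralizer.mpr hAB, commutator_bot_left])
      (commutator_eq_bot_iff_le_centralizer.mpr hBPA)
    refine le_centralizer_of_commutator_le_centralizer hP hA hAP (le_trans ?_ hPB)
    exact le_inf (commutator_comm P A ▸ le_normalizer_iff_commutator_le_right.mp hAP)
      (commutator_eq_bot_iff_le_centralizer.mp h3)

theorem isPGroup_zpowers_of_orderOf_eq {x : G} (hx : orderOf x = p) : IsPGroup p (zpowers x) :=
  IsPGroup.of_card (by rw [Nat.card_zpowers, hx, pow_one])

theorem zpowers_ne_bot_of_orderOf_eq [Fact p.Prime] {x : G} (hx : orderOf x = p) :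
    zpowers x ≠ ⊥ :=
  zpowers_ne_bot.mpr fun h => (Fact.out : p.Prime).ne_one (hx ▸ orderOf_eq_one_iff.mpr h)

theorem ParabolicCharP.hasCharP_normalizer_zpowers [Fact p.Prime] (hG : ParabolicCharP p G)
    {x : G} (hx : IsPCentral p x) : HasCharP p (normalizer (zpowers x : Set G)) := by
  obtain ⟨hxp, S, -, hxc⟩ := hx
  exact hG _ (zpowers_ne_bot_of_orderOf_eq hxp) (isPGroup_zpowers_of_orderOf_eq hxp)
    ⟨S, (le_centralizer_iff.mp (zpowers_le.mpr hxc)).trans (centralizer_le_normalizer _)⟩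

section Finite

variable [Finite G] [Fact p.Prime]

theorem isPGroup_of_forall_orderOf_coprime_eq_one {W : Subgroup G}
    (h : ∀ y ∈ W, (orderOf y).Coprime p → y = 1) : IsPGroup p W := by
  refine IsPGroup.of_card
    (Nat.eq_prime_pow_of_unique_prime_dvd Nat.card_pos.ne' fun {q} hq hqW => ?_)
  have := Fact.mk hq
  obtain ⟨y, hy⟩ := exists_prime_orderOf_dvd_card' q hqW
  by_contra hqp
  have hy1 := h y y.2 (by rwa [orderOf_coe, hy, Nat.coprime_primes hq Fact.out])
  rw [← orderOf_coe, hy1, orderOf_one] at hy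
  exact hq.one_lt.ne hy

theorem IsPGroup.exists_orderOf_eq_mem_inf_centralizer {S : Subgroup G} (hS : IsPGroup p S)
    (hS1 : S ≠ ⊥) : ∃ z ∈ S ⊓ centralizer S, orderOf z = p := by
  have := (nontrivial_iff_ne_bot S).mpr hS1
  have := hS.center_nontrivial
  obtain ⟨n, hn, hcard⟩ := (hS.to_subgroup (center S)).nontrivial_iff_card.mp this
  obtain ⟨z, hz⟩ := exists_prime_orderOf_dvd_card' (G := center S) p
    (hcard ▸ dvd_pow_self p hn.ne')
  refine ⟨z, ⟨(z : S).2, mem_centralizer_iff.mpr fun s hs => ?_⟩, ?_⟩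
  · exact congrArg Subtype.val (mem_center_iff.mp z.2 ⟨s, hs⟩)
  · rwa [orderOf_coe, orderOf_coe]

theorem exists_isPCentral_mem_pCore_centralizer {T : Subgroup G} (hT : IsPGroup p T)
    (hT1 : T ≠ ⊥) (h : HasCharP p (centralizer (T : Set G))) :
    ∃ x ∈ (centralizer (T : Set G)).pCore p, IsPCentral p x := by
  set C := centralizer (T : Set G)
  obtain ⟨S, hS⟩ := (hT.to_sup_of_normal_left' C.isPGroup_pCore
    (C.pCore_le.trans (centralizer_le_normalizer _))).exists_le_sylow
  have hTS : T ≤ S := le_sup_left.trans hS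
  have hQS : C.pCore p ≤ S := le_sup_right.trans hS
  obtain ⟨z, ⟨hzS, hzc⟩, hz⟩ :=
    S.isPGroup'.exists_orderOf_eq_mem_inf_centralizer (ne_bot_of_le_ne_bot hT1 hTS)
  have hzQ : z ∈ C.pCore p :=
    (hasCharP_iff_inf_centralizer_le C).mp h ⟨centralizer_le hTS hzc, centralizer_le hQS hzc⟩
  exact ⟨z, hzQ, hz, S, hzS, hzc⟩

theorem HasCharP.isPGroup_of_le_centralizer {N T W : Subgroup G} (hN : HasCharP p N)
    (hT : IsPGroup p T) (hTN : T ≤ N) (hWN : W ≤ N) (hWC : W ≤ centralizer T)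
    (hCW : centralizer T ≤ normalizer (W : Set G)) (hEW : N.pCore p ⊓ W ≤ centralizer W) :
    IsPGroup p W := by
  set E := N.pCore p
  set C := centralizer (T : Set G)
  refine isPGroup_of_forall_orderOf_coprime_eq_one fun y hyW hy => ?_
  have hA : (Nat.card (zpowers y)).Coprime p := by rwa [Nat.card_zpowers]
  have hAW : zpowers y ≤ W := zpowers_le.mpr hyW
  have hAE : zpowers y ≤ normalizer E := hAW.trans (hWN.trans N.le_normalizer_pCore)
  have hVA : E ⊓ C ≤ centralizer (zpowers y) := by
    have hAV : zpowers y ≤ normalizer (E ⊓ C :) :=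
      (le_inf hAE (hAW.trans (hWC.trans le_normalizer))).trans inf_normalizer_le_normalizer_inf
    refine le_centralizer_of_commutator_le_centralizer N.isPGroup_pCore.to_inf_left hA hAV
      (le_trans ?_ (hEW.trans (centralizer_le hAW)))
    exact le_inf ((commutator_mono inf_le_left le_rfl).trans
        (le_normalizer_iff_commutator_le_left.mp hAE))
      ((commutator_mono le_rfl hAW).trans
        (le_normalizer_iff_commutator_le_right.mp (inf_le_right.trans hCW)))
  have hEA : E ≤ centralizer (zpowers y) :=
    le_centralizer_of_inf_centralizer_le hT hA (hAW.trans hWC) E N.isPGroup_pCore hAE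
      (hTN.trans N.le_normalizer_pCore) hVA
  have hyE : y ∈ E := (hasCharP_iff_inf_centralizer_le N).mp hN
    ⟨hWN hyW, le_centralizer_iff.mp hEA (mem_zpowers y)⟩
  obtain ⟨k, hk⟩ := N.isPGroup_pCore ⟨y, hyE⟩
  rw [← orderOf_eq_one_iff]
  exact (hy.pow_right k).eq_one_of_dvd (orderOf_dvd_of_pow_eq_one (congrArg Subtype.val hk))

theorem hasCharP_centralizer_of_isPCentral_mem_pCore (hG : ParabolicCharP p G) {T : Subgroup G}
    [IsMulCommutative T] (hT : IsPGroup p T) {x : G}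
    (hxQ : x ∈ (centralizer (T : Set G)).pCore p) (hx : IsPCentral p x) :
    HasCharP p (centralizer (T : Set G)) := by
  set C := centralizer (T : Set G)
  set Q := C.pCore p
  set P := zpowers x
  set N := normalizer (P : Set G)
  set E := N.pCore p
  set W := centralizer (Q : Set G)
  have hxP : P ≤ Q := zpowers_le.mpr hxQ
  have hN : HasCharP p N := hG.hasCharP_normalizer_zpowers hx
  have hTQ : T ≤ Q := C.le_pCore (le_centralizer T) hT (centralizer_le_normalizer _)
  have hWC : W ≤ C := centralizer_le hTQ
  have hCW : C ≤ normalizer W :=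
    C.le_normalizer_pCore.trans (normalizer_le_normalizer_centralizer Q)
  have hWN : W ≤ N := (centralizer_le hxP).trans (centralizer_le_normalizer _)
  have hTN : T ≤ N :=
    (le_centralizer_iff.mp (hxP.trans (C.pCore_le))).trans (centralizer_le_normalizer _)
  have hEW : E ⊓ W ≤ centralizer W := by
    have hWEW : W ≤ normalizer (E ⊓ W :) :=
      (le_inf (hWN.trans N.le_normalizer_pCore) le_normalizer).trans
        inf_normalizer_le_normalizer_inf
    have hEW : E ⊓ W ≤ W.pCore p := W.le_pCore inf_le_right N.isPGroup_pCore.to_inf_left hWEW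
    have hWQ : W.pCore p ≤ Q := C.le_pCore (W.pCore_le.trans hWC) W.isPGroup_pCore
      (hCW.trans W.normalizer_le_normalizer_pCore)
    exact hEW.trans (hWQ.trans (le_centralizer_iff.mp le_rfl))
  have hWp : IsPGroup p W := HasCharP.isPGroup_of_le_centralizer hN hT hTN hWN hWC hCW hEW
  exact (hasCharP_iff_inf_centralizer_le C).mpr (inf_le_right.trans (C.le_pCore hWC hWp hCW))

end Finite

end

theorem stmt14_general (p : ℕ) [Fact p.Prime] (G : Type*) [Group G] [Finite G]
    (hG : ParabolicCharP p G) (t : G) (ht : orderOf t = p)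
    (T C : Subgroup G) (hT : T = Subgroup.zpowers t)
    (hC : C = Subgroup.centralizer (T : Set G)) :
    (∃ x ∈ (pCore p ↥C).map C.subtype, IsPCentral p x) ↔ HasCharP p ↥C := by
  subst hT hC
  have hTp := isPGroup_zpowers_of_orderOf_eq ht
  exact ⟨fun ⟨_, hxQ, hx⟩ => hasCharP_centralizer_of_isPCentral_mem_pCore hG hTp hxQ hx,
    exists_isPCentral_mem_pCore_centralizer hTp (zpowers_ne_bot_of_orderOf_eq ht)⟩

/-- For `G` of parabolic characteristic `p` and `T = ⟨t⟩` of order `p` with `t` not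
`p`-central, `O_p(C_G(T))` contains a `p`-central element of `G` iff `C_G(T)` has
characteristic `p`. -/
theorem stmt14 (p : ℕ) [Fact p.Prime] (G : Type*) [Group G] [Finite G]
    (hG : ParabolicCharP p G) (t : G) (ht : orderOf t = p) (hnc : ¬ IsPCentral p t)
    (T C : Subgroup G) (hT : T = Subgroup.zpowers t)
    (hC : C = Subgroup.centralizer (T : Set G)) :
    (∃ x ∈ (pCore p ↥C).map C.subtype, IsPCentral p x) ↔ HasCharP p ↥C :=
  stmt14_general p G hG t ht T C hT hC
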